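/- Let f₀, f₁ be orientation-preserving homeomorphisms of S¹ = ℝ/2ℤ, let f_t (t ∈ [0,1]) be an isotopy between them, and let f_y (y ∈ [0,1)) be the associated family of fiber maps of the almost step skew product F over the solenoid. Let b ∈ B have forward itinerary ω = ω(b), and let k ≥ 1. If for every 0 ≤ i ≤ k−1 it is not the case that both ω_{i+1} = 1 and ω_{i+2} = 1, then f_{y(h^i(b))} = f_{ω_i} for every 0 ≤ i ≤ k−1, and consequently f_{y(h^{k−1}(b))} ∘ ⋯ ∘ f_{y(h(b))} ∘ f_{y(b)} = f_{ω_{k−1}} ∘ ⋯ ∘ f_{ω_1} ∘ f_{ω_0}. -/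

import Mathlib

open MeasureTheory Set Filter Topology Metric

instance : Fact ((0 : ℝ) < 2) := ⟨by norm_num⟩
instance : Fact ((0 : ℝ) < 1) := ⟨by norm_num⟩

/-- The circle `S¹ = ℝ/2ℤ` (the fiber). -/
abbrev S1 := AddCircle (2 : ℝ)

/-- The base ambient space `(ℝ/ℤ) × ℂ`. -/
abbrev Base := AddCircle (1 : ℝ) × ℂ

/-- The solenoid map `h(y,z) = (2y, e^{2πiy} + λz)` (here `AddCircle.toCircle y = e^{2πiy}`). -/
noncomputable def solenoidMap (lam : ℝ) (b : Base) : Base :=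
  (b.1 + b.1, (AddCircle.toCircle b.1 : ℂ) + lam * b.2)

/-- The solid torus `B = (ℝ/ℤ) × D(R)`. -/
def solidTorus (R : ℝ) : Set Base := univ ×ˢ closedBall (0 : ℂ) R

/-- The representative in `[0,1)` of a point of `ℝ/ℤ`. -/
noncomputable def rep1 (y : AddCircle (1 : ℝ)) : ℝ :=
  ((AddCircle.equivIco (1 : ℝ) 0) y : ℝ)

/-- The family of fiber maps of the almost step skew product:
`f_y = f₀` on `[0, 3/8)`, `f_y = f_{8y−3}` on `[3/8, 1/2)`, `f_y = f₁` on `[1/2, 7/8)`,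
and `f_y = f_{8−8y}` on `[7/8, 1)`. -/
noncomputable def fiberFam (f0 f1 : S1 → S1) (ft : ℝ → S1 → S1) (y : ℝ) : S1 → S1 :=
  if y < 3 / 8 then f0
  else if y < 1 / 2 then ft (8 * y - 3)
  else if y < 7 / 8 then f1
  else ft (8 - 8 * y)

/-- The almost step skew product `F(b,x) = (h(b), f_{y(b)}(x))` over the solenoid. -/
noncomputable def almostStep (lam : ℝ) (f0 f1 : S1 → S1) (ft : ℝ → S1 → S1)
    (p : Base × S1) : Base × S1 :=
  (solenoidMap lam p.1, fiberFam f0 f1 ft (rep1 p.1.1) p.2)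

/-- The forward itinerary of `b`: `ω_k = 0` iff the fractional part of `2^k·y(b)` lies in
`[0, 1/2)` (`false` = 0, `true` = 1). -/
noncomputable def itin (b : Base) (k : ℕ) : Bool :=
  decide ((1 : ℝ) / 2 ≤ rep1 ((2 ^ k : ℕ) • b.1))

/-- A circle map is orientation preserving if it admits a strictly monotone lift
commuting with the deck translation `x ↦ x + 2`. -/
def OrientPreserving (f : S1 → S1) : Prop :=
  ∃ G : ℝ → ℝ, StrictMono G ∧ (∀ x, G (x + 2) = G x + 2) ∧
    ∀ x : ℝ, ((G x : ℝ) : S1) = f ((x : ℝ) : S1)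

/-- The composition `f_{w_{k−1}} ∘ ⋯ ∘ f_{w_1} ∘ f_{w_0}` along a binary word `w`. -/
def wordComp (f0 f1 : S1 → S1) (w : ℕ → Bool) : ℕ → S1 → S1
  | 0 => id
  | k + 1 => (if w k then f1 else f0) ∘ wordComp f0 f1 w k


/-!
Writing `y(b) = x`, the base coordinate of `h^i(b)` is `2^i x mod 1`, so `y(h^i(b))` is the
`i`-th iterate of the doubling map and `ω_i` records whether it lies in `[1/2, 1)`. The fiber map
`f_y` differs from the step map `f_{ω(y)}` only for `y ∈ [3/8, 1/2) ∪ [7/8, 1)`, which is exactly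
where the doubled point lies in `[3/4, 1)`, i.e. where the next two symbols are both `1`.
-/

lemma rep1_coe (x : ℝ) : rep1 (x : AddCircle (1 : ℝ)) = Int.fract x := by
  simp [rep1, AddCircle.coe_equivIco_mk_apply]

lemma coe_rep1 (y : AddCircle (1 : ℝ)) : (rep1 y : AddCircle (1 : ℝ)) = y :=
  (AddCircle.equivIco (1 : ℝ) 0).symm_apply_apply y

lemma rep1_nsmul (n : ℕ) (y : AddCircle (1 : ℝ)) : rep1 (n • y) = Int.fract (n * rep1 y) := by
  conv_lhs => rw [← coe_rep1 y, ← AddCircle.coe_nsmul, nsmul_eq_mul, rep1_coe]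

lemma solenoidMap_iterate_fst (lam : ℝ) (b : Base) (i : ℕ) :
    ((solenoidMap lam)^[i] b).1 = (2 ^ i : ℕ) • b.1 := by
  induction i with
  | zero => simp
  | succ n ih =>
    rw [Function.iterate_succ_apply', solenoidMap, ih, pow_succ', mul_smul, two_nsmul]

lemma fract_two_mul (x : ℝ) :
    Int.fract (2 * x) = if Int.fract x < 1 / 2 then 2 * Int.fract x else 2 * Int.fract x - 1 := by
  have hx : 2 * x = 2 * Int.fract x + ((2 * ⌊x⌋ : ℤ) : ℝ) := by
    push_cast; rw [← Int.self_sub_floor]; ring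
  have h0 := Int.fract_nonneg x
  have h1 := Int.fract_lt_one x
  rw [hx, Int.fract_add_intCast]
  split_ifs with h
  · exact Int.fract_eq_self.2 ⟨by linarith, by linarith⟩
  · exact Int.fract_eq_iff.2 ⟨by linarith, by linarith, 1, by push_cast; ring⟩

lemma fiberFam_fract_of_not_two_ones (f0 f1 : S1 → S1) (ft : ℝ → S1 → S1) (x : ℝ)
    (h : ¬(1 / 2 ≤ Int.fract (2 * x) ∧ 1 / 2 ≤ Int.fract (2 * (2 * x)))) :
    fiberFam f0 f1 ft (Int.fract x) = if 1 / 2 ≤ Int.fract x then f1 else f0 := by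
  have h2x : Int.fract (2 * x) < 3 / 4 := by
    by_contra! h2x
    exact h ⟨by linarith, by rw [fract_two_mul, if_neg (by linarith)]; linarith⟩
  have h0 := Int.fract_nonneg x
  rw [fract_two_mul] at h2x
  unfold fiberFam
  split_ifs at h2x ⊢ <;> first | rfl | (exfalso; linarith)

lemma almostStep_iterate (lam : ℝ) (f0 f1 : S1 → S1) (ft : ℝ → S1 → S1) (b : Base)
    (w : ℕ → Bool) (k : ℕ)
    (hw : ∀ i < k, fiberFam f0 f1 ft (rep1 ((solenoidMap lam)^[i] b).1) = if w i then f1 else f0)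
    (x : S1) :
    (almostStep lam f0 f1 ft)^[k] (b, x) = ((solenoidMap lam)^[k] b, wordComp f0 f1 w k x) := by
  induction k with
  | zero => rfl
  | succ k ih =>
    rw [Function.iterate_succ_apply', ih fun i hi => hw i (by omega),
      Function.iterate_succ_apply', almostStep, hw k k.lt_succ_self]
    rfl

theorem stmt_19_general (lam : ℝ) (f0 f1 : S1 ≃ₜ S1) (ft : ℝ → S1 → S1) (b : Base) (k : ℕ)
    (hno11 : ∀ i : ℕ, i < k → ¬(itin b (i + 1) = true ∧ itin b (i + 2) = true)) :
    (∀ i : ℕ, i < k →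
      fiberFam f0 f1 ft (rep1 (((solenoidMap lam)^[i] b).1))
        = (if itin b i then ⇑f1 else ⇑f0)) ∧
    ∀ x : S1, ((almostStep lam f0 f1 ft)^[k] (b, x)).2 = wordComp f0 f1 (itin b) k x := by
  set y := rep1 b.1
  have hbase (i : ℕ) : rep1 ((solenoidMap lam)^[i] b).1 = Int.fract (2 ^ i * y) := by
    rw [solenoidMap_iterate_fst, rep1_nsmul]; push_cast; rfl
  have hitin (i : ℕ) : itin b i = decide (1 / 2 ≤ Int.fract (2 ^ i * y)) := by
    rw [itin, rep1_nsmul]; push_cast; rfl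
  have hfiber : ∀ i < k, fiberFam f0 f1 ft (rep1 ((solenoidMap lam)^[i] b).1)
      = if itin b i then ⇑f1 else ⇑f0 := by
    intro i hi
    have hnext := hno11 i hi
    rw [hitin, hitin, pow_succ', pow_succ', pow_succ', mul_assoc, mul_assoc, mul_assoc] at hnext
    rw [hbase, hitin, fiberFam_fract_of_not_two_ones _ _ _ _ (by simpa using hnext)]
    simp only [decide_eq_true_eq]
  exact ⟨hfiber, fun x => congrArg Prod.snd (almostStep_iterate lam f0 f1 ft b (itin b) k hfiber x)⟩

/-- Remark 7 of the paper. Let `f₀, f₁` be orientation-preserving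
homeomorphisms of `S¹ = ℝ/2ℤ`, `f_t` an isotopy between them, and `F` the associated
almost step skew product over the solenoid. Let `b ∈ B` have forward itinerary `ω`, and
let `k ≥ 1`. If for every `0 ≤ i ≤ k−1` it is not the case that `ω_{i+1} = 1` and
`ω_{i+2} = 1`, then `f_{y(h^i(b))} = f_{ω_i}` for every `0 ≤ i ≤ k−1`, and consequently
`f_{y(h^{k−1}(b))} ∘ ⋯ ∘ f_{y(b)} = f_{ω_{k−1}} ∘ ⋯ ∘ f_{ω_0}`. -/
theorem stmt_19 (R lam : ℝ) (hR : 2 ≤ R) (hlam0 : 0 < lam) (hlam1 : lam < 0.1)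
    (hlamR : lam * R < 1)
    (f0 f1 : S1 ≃ₜ S1) (hor0 : OrientPreserving f0) (hor1 : OrientPreserving f1)
    (ft : ℝ → S1 → S1) (hft0 : ft 0 = ⇑f0) (hft1 : ft 1 = ⇑f1)
    (hftcont : ContinuousOn (fun q : ℝ × S1 => ft q.1 q.2) (Icc (0 : ℝ) 1 ×ˢ univ))
    (hfthomeo : ∀ t ∈ Icc (0 : ℝ) 1, ∃ e : S1 ≃ₜ S1, ft t = ⇑e)
    (b : Base) (hb : b ∈ solidTorus R) (k : ℕ) (hk : 1 ≤ k)
    (hno11 : ∀ i : ℕ, i < k → ¬(itin b (i + 1) = true ∧ itin b (i + 2) = true)) :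
    (∀ i : ℕ, i < k →
      fiberFam f0 f1 ft (rep1 (((solenoidMap lam)^[i] b).1))
        = (if itin b i then ⇑f1 else ⇑f0)) ∧
    ∀ x : S1, ((almostStep lam f0 f1 ft)^[k] (b, x)).2 = wordComp f0 f1 (itin b) k x :=
  stmt_19_general lam f0 f1 ft b k hno11
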